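/- Let M be a topological space with a Borel measure μ and let Ω : M × M → ℂ be continuous and satisfy propagator conditions (1), (3), (4) and (5). Suppose Ψ ∈ L²(M, μ) satisfies Ψ(x) = ∫_M Ψ(y)Ω(y,x) dμ(y) for μ-almost every x (i.e. Ψ is in the range of the projection P_Ω). Then the function Φ(x) := ∫_M Ψ(y)Ω(y,x) dμ(y) is everywhere defined and continuous, Φ = Ψ μ-almost everywhere, and |Φ(x)| ≤ ‖Ψ‖_{L²(μ)} for every x ∈ M; in particular Ψ is essentially bounded with a continuous representative. -/

import Mathlib

/-!
By the reproducing property (4) and the symmetry (3), the functions `Ω x ·` lie in `L²(μ)` and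
satisfy `⟪Ω x ·, Ω x' ·⟫ = Ω x' x`; by (1) they are unit vectors. Hence
`‖Ω x' · - Ω x ·‖² = 2 - 2 Re Ω x x'`, so `x ↦ Ω x ·` is continuous into `L²`, and
`Φ x = ⟪Ω x ·, Ψ⟫` is continuous and bounded by `‖Ψ‖` by Cauchy–Schwarz.
-/

open MeasureTheory Filter Topology ComplexConjugate

theorem tendsto_of_tendsto_inner_of_tendsto_norm {𝕜 E α : Type*} [RCLike 𝕜]
    [NormedAddCommGroup E] [InnerProductSpace 𝕜 E] {l : Filter α} {f : α → E} {a : E}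
    (hinner : Tendsto (fun i => inner 𝕜 a (f i)) l (𝓝 (inner 𝕜 a a)))
    (hnorm : Tendsto (fun i => ‖f i‖) l (𝓝 ‖a‖)) :
    Tendsto f l (𝓝 a) := by
  rw [tendsto_iff_norm_sub_tendsto_zero]
  have hsq : Tendsto (fun i => ‖f i - a‖ ^ 2) l (𝓝 0) := by
    have := (hnorm.pow 2).sub ((RCLike.continuous_re.tendsto _).comp hinner |>.const_mul 2)
      |>.add_const (‖a‖ ^ 2)
    simp only [Function.comp_def, ← norm_sub_sq (𝕜 := 𝕜), sub_self, norm_zero] at this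
    convert this using 2 with i
    rw [norm_sub_sq (𝕜 := 𝕜), inner_re_symm]
    simp
  simpa using hsq.sqrt

section

variable {M : Type*} [MeasurableSpace M] {μ : Measure M} {Ω : M → M → ℂ}

theorem memLp_two_of_hermitian (h3 : ∀ x y, Ω x y = conj (Ω y x)) {x : M}
    (hmeas : AEStronglyMeasurable (Ω x) μ) (hint : Integrable (fun z => Ω x z * Ω z x) μ) :
    MemLp (Ω x) 2 μ := by
  rw [memLp_two_iff_integrable_sq_norm hmeas]
  refine hint.re.congr (.of_forall fun y => ?_)
  simp only [RCLike.re_to_complex, h3 y x, Complex.mul_conj', ← Complex.ofReal_pow,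
    Complex.ofReal_re]

noncomputable def kernelLp (hmem : ∀ x, MemLp (Ω x) 2 μ) (x : M) : Lp ℂ 2 μ :=
  (hmem x).toLp (Ω x)

variable (hmem : ∀ x, MemLp (Ω x) 2 μ)

theorem inner_kernelLp_left (h3 : ∀ x y, Ω x y = conj (Ω y x)) (x : M) (f : Lp ℂ 2 μ) :
    inner ℂ (kernelLp hmem x) f = ∫ y, f y * Ω y x ∂μ := by
  rw [L2.inner_def]
  refine integral_congr_ae ?_
  filter_upwards [(hmem x).coeFn_toLp] with y hy
  rw [kernelLp, hy, RCLike.inner_apply, ← h3 y x, mul_comm]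

theorem inner_kernelLp_kernelLp (h3 : ∀ x y, Ω x y = conj (Ω y x))
    (h4 : ∀ x y, ∫ z, Ω x z * Ω z y ∂μ = Ω x y) (x x' : M) :
    inner ℂ (kernelLp hmem x) (kernelLp hmem x') = Ω x' x := by
  rw [inner_kernelLp_left hmem h3, ← h4]
  refine integral_congr_ae ?_
  filter_upwards [(hmem x').coeFn_toLp] with y hy
  rw [kernelLp, hy]

theorem norm_kernelLp (h1 : ∀ x, Ω x x = 1) (h3 : ∀ x y, Ω x y = conj (Ω y x))
    (h4 : ∀ x y, ∫ z, Ω x z * Ω z y ∂μ = Ω x y) (x : M) :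
    ‖kernelLp hmem x‖ = 1 := by
  rw [norm_eq_sqrt_re_inner (𝕜 := ℂ), inner_kernelLp_kernelLp hmem h3 h4, h1]
  simp

theorem continuous_kernelLp [TopologicalSpace M] (hcont : ∀ x, Continuous fun x' => Ω x' x)
    (h1 : ∀ x, Ω x x = 1) (h3 : ∀ x y, Ω x y = conj (Ω y x))
    (h4 : ∀ x y, ∫ z, Ω x z * Ω z y ∂μ = Ω x y) :
    Continuous (kernelLp hmem) := by
  refine continuous_iff_continuousAt.2 fun x =>
    tendsto_of_tendsto_inner_of_tendsto_norm (𝕜 := ℂ) ?_ ?_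
  · simp only [inner_kernelLp_kernelLp hmem h3 h4]
    exact (hcont x).continuousAt
  · simp only [norm_kernelLp hmem h1 h3 h4]
    exact tendsto_const_nhds

end

theorem physical_section_continuous_bounded
    {M : Type*} [TopologicalSpace M] [MeasurableSpace M] [BorelSpace M]
    (μ : Measure M)
    (Ω : M → M → ℂ)
    (hΩcont : Continuous fun p : M × M => Ω p.1 p.2)
    (h1 : ∀ x, Ω x x = 1)
    (h3 : ∀ x y, Ω x y = (starRingEnd ℂ) (Ω y x))
    (h4int : ∀ x y, Integrable (fun z => Ω x z * Ω z y) μ)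
    (h4 : ∀ x y, ∫ z, Ω x z * Ω z y ∂μ = Ω x y)
    (Ψ : Lp ℂ 2 μ)
    (hΨ : ∀ᵐ x ∂μ, Ψ x = ∫ y, Ψ y * Ω y x ∂μ) :
    Continuous (fun x => ∫ y, Ψ y * Ω y x ∂μ) ∧
    (∀ᵐ x ∂μ, (∫ y, Ψ y * Ω y x ∂μ) = Ψ x) ∧
    ∀ x, ‖∫ y, Ψ y * Ω y x ∂μ‖ ≤ ‖Ψ‖ := by
  have hmem : ∀ x, MemLp (Ω x) 2 μ := fun x =>
    memLp_two_of_hermitian h3 (hΩcont.comp (.prodMk_right x)).aestronglyMeasurable (h4int x x)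
  simp only [← inner_kernelLp_left hmem h3]
  have hcont := continuous_kernelLp hmem (fun x => hΩcont.comp (.prodMk_left x)) h1 h3 h4
  refine ⟨hcont.inner continuous_const,
    hΨ.mono fun x hx => by rw [inner_kernelLp_left hmem h3, hx], fun x => ?_⟩
  calc ‖inner ℂ (kernelLp hmem x) Ψ‖ ≤ ‖kernelLp hmem x‖ * ‖Ψ‖ :=
      norm_inner_le_norm _ _
    _ = ‖Ψ‖ := by rw [norm_kernelLp hmem h1 h3 h4, one_mul]
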